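/- Let c be a central element of a unital associative algebra A with unit e, and Δ: A → A ⊗ A a unital algebra homomorphism. In the 4-fold tensor power A^{⊗4}, define C₁₂ = Δ(c) ⊗ e ⊗ e, C₃₄ = e ⊗ e ⊗ Δ(c), and C₁₂₃₄ = ((Δ ⊗ Δ) ∘ Δ)(c). Then C₁₂, C₃₄, C₁₂₃₄ pairwise commute. -/
import Mathlib


open TensorProduct

/-- The main theorem specialized to the binary tree `V(V(•,•),V(•,•))` with 4
leaves.  For a central element `c` of a unital associative algebra `A` and a
unital algebra homomorphism `Δ : A → A ⊗ A`, the elements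
`C₁₂ = Δ(c) ⊗ e ⊗ e`, `C₃₄ = e ⊗ e ⊗ Δ(c)` and `C₁₂₃₄ = ((Δ ⊗ Δ) ∘ Δ)(c)`
of the 4-fold tensor power `A^{⊗4}` pairwise commute. -/
theorem four_fold_casimirs_commute (R A : Type*) [CommRing R] [Ring A] [Algebra R A]
    (Δ : A →ₐ[R] A ⊗[R] A) (c : A) (hc : ∀ y : A, c * y = y * c) :
    let C₁₂ : (A ⊗[R] A) ⊗[R] (A ⊗[R] A) := (Δ c) ⊗ₜ[R] 1
    let C₃₄ : (A ⊗[R] A) ⊗[R] (A ⊗[R] A) := 1 ⊗ₜ[R] (Δ c)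
    let C₁₂₃₄ : (A ⊗[R] A) ⊗[R] (A ⊗[R] A) := Algebra.TensorProduct.map Δ Δ (Δ c)
    Commute C₁₂ C₃₄ ∧ Commute C₁₂ C₁₂₃₄ ∧ Commute C₃₄ C₁₂₃₄ := by
  intro C₁₂ C₃₄ C₁₂₃₄
  -- Δ c commutes with every Δ a
  have key : ∀ a : A, Commute (Δ c) (Δ a) := fun a => by
    unfold Commute SemiconjBy
    rw [← map_mul, ← map_mul, hc]
  have h12 : ∀ z : A ⊗[R] A, Commute C₁₂ (Algebra.TensorProduct.map Δ Δ z) := by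
    intro z
    induction z using TensorProduct.induction_on with
    | zero => simpa using Commute.zero_right _
    | tmul a b =>
      show Commute (Δ c ⊗ₜ[R] 1) (Δ a ⊗ₜ[R] Δ b)
      unfold Commute SemiconjBy
      rw [Algebra.TensorProduct.tmul_mul_tmul, Algebra.TensorProduct.tmul_mul_tmul,
        (key a).eq, one_mul, mul_one]
    | add x y hx hy => simpa [map_add] using hx.add_right hy
  have h34 : ∀ z : A ⊗[R] A, Commute C₃₄ (Algebra.TensorProduct.map Δ Δ z) := by
    intro z
    induction z using TensorProduct.induction_on with
    | zero => simpa using Commute.zero_right _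
    | tmul a b =>
      show Commute ((1 : A ⊗[R] A) ⊗ₜ[R] Δ c) (Δ a ⊗ₜ[R] Δ b)
      unfold Commute SemiconjBy
      rw [Algebra.TensorProduct.tmul_mul_tmul, Algebra.TensorProduct.tmul_mul_tmul,
        (key b).eq, one_mul, mul_one]
    | add x y hx hy => simpa [map_add] using hx.add_right hy
  refine ⟨?_, h12 (Δ c), h34 (Δ c)⟩
  unfold Commute SemiconjBy C₁₂ C₃₄
  rw [Algebra.TensorProduct.tmul_mul_tmul, Algebra.TensorProduct.tmul_mul_tmul,
    one_mul, mul_one]
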